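/- Let α ∈ (0,1) and λ := (1−α)/(2α). If λ is a totally real algebraic integer and some real root λ' of the minimal polynomial of λ over ℚ satisfies λ' > λ (i.e., λ is not the largest among its conjugate elements), then n ≤ N_α(n) ≤ n + 2 for all n ≥ 1. -/

import Mathlib

open scoped Classical

/-- The adjacency matrix (over `ℝ`) of a simple graph. -/
noncomputable def adjMat {V : Type*} [Fintype V] (G : SimpleGraph V) : Matrix V V ℝ :=
  fun i j => if G.Adj i j then 1 else 0

/-- The spectral radius of a finite simple graph: the largest eigenvalue of its
adjacency matrix. -/
noncomputable def specRad {V : Type*} [Fintype V] (G : SimpleGraph V) : ℝ :=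
  sSup {μ : ℝ | ∃ v : V → ℝ, v ≠ 0 ∧ (adjMat G).mulVec v = μ • v}

/-- `Contains G H` : the graph `H` contains a copy of `G` as a subgraph. -/
def Contains {V W : Type*} (G : SimpleGraph V) (H : SimpleGraph W) : Prop :=
  ∃ f : V → W, Function.Injective f ∧ ∀ ⦃a b⦄, G.Adj a b → H.Adj (f a) (f b)

/-- `beta m` : the unique positive real root of `x^(m+1) = 1 + x + ⋯ + x^(m-1)`. -/
noncomputable def beta (m : ℕ) : ℝ :=
  sSup {x : ℝ | 0 < x ∧ x ^ (m + 1) = ∑ i ∈ Finset.range m, x ^ i}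

/-- `alpha m = beta m ^ (1/2) + beta m ^ (-1/2)`. -/
noncomputable def alpha (m : ℕ) : ℝ :=
  Real.sqrt (beta m) + (Real.sqrt (beta m))⁻¹

/-- `λ* = √(2+√5)`. -/
noncomputable def lambdaStar : ℝ := Real.sqrt (2 + Real.sqrt 5)

/-- A spherical `L`-code in `ℝ^n`: a finite set of unit vectors whose pairwise
inner products lie in `L`. -/
def SphericalCode (n : ℕ) (L : Set ℝ) (C : Finset (EuclideanSpace ℝ (Fin n))) : Prop :=
  (∀ v ∈ C, ‖v‖ = 1) ∧
  ∀ v ∈ C, ∀ w ∈ C, v ≠ w → (inner ℝ v w : ℝ) ∈ L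

/-- `Nmax a n` : the maximum cardinality of a spherical `{-a, a}`-code in `ℝ^n`,
i.e. the maximum number of equiangular lines in `ℝ^n` with angle `arccos a`. -/
noncomputable def Nmax (a : ℝ) (n : ℕ) : ℕ :=
  sSup {k : ℕ | ∃ C : Finset (EuclideanSpace ℝ (Fin n)),
    SphericalCode n {-a, a} C ∧ C.card = k}

/-- The spectral radius order of `l` : the smallest number of vertices of a finite
simple graph whose spectral radius is `l`; `⊤` if there is no such graph. -/
noncomputable def specOrder (l : ℝ) : ℕ∞ :=
  sInf ((fun k : ℕ => (k : ℕ∞)) '' {k : ℕ | ∃ G : SimpleGraph (Fin k), specRad G = l})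

/-- The set `L(α, t)` from the paper. -/
noncomputable def Lset (a : ℝ) (t : ℕ) : Set ℝ :=
  { -(1 / ((1 - a) / (2 * a))) * (1 - 1 / ((t : ℝ) + a⁻¹)) + 1 / ((t : ℝ) + a⁻¹),
    1 / ((t : ℝ) + a⁻¹) }

/-- The underlying graph of a spherical code: vertices are the code vectors, two
of them adjacent iff their inner product is negative. -/
def codeGraph {n : ℕ} (C : Finset (EuclideanSpace ℝ (Fin n))) :
    SimpleGraph {v // v ∈ C} :=
  SimpleGraph.fromRel (fun v w =>
    (inner ℝ (v : EuclideanSpace ℝ (Fin n)) (w : EuclideanSpace ℝ (Fin n)) : ℝ) < 0)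

/-- `x` is a totally real algebraic integer: it is integral over `ℤ` and every
complex root of its minimal polynomial over `ℚ` is real. -/
def TotallyRealAlgInt (x : ℝ) : Prop :=
  IsIntegral ℤ x ∧ ∀ z : ℂ, Polynomial.aeval z (minpoly ℚ x) = 0 → z.im = 0

/-!
If an `{-a, a}`-code `C` in `ℝⁿ` had more than `n` vectors, its Gram matrix `1 + a • S`, with `S`
the rational Seidel matrix of `C`, would be singular, so `-1/a = -(2λ + 1)` would be an eigenvalue
of `S`. The eigenvalues of a rational matrix are closed under conjugation over `ℚ`, so
`-(2λ' + 1)` would be one as well, and `1 - a (2λ' + 1) < 0` would be an eigenvalue of the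
positive semidefinite Gram matrix. Hence `N_a(n) ≤ n`; the vectors `√(1 - a) eᵢ + t 𝟙` (for the
right `t`) give equality.
-/

open Polynomial Matrix

namespace Matrix

variable {ι : Type*} [Fintype ι]

theorem isRoot_charpoly_map_aeval_of_aeval_minpoly [DecidableEq ι] {K L : Type*} [Field K] [Field L]
    [Algebra K L] (M : Matrix ι ι K) (q : K[X]) {x y : L}
    (hx : (M.map (algebraMap K L)).charpoly.IsRoot (aeval x q))
    (hy : aeval y (minpoly K x) = 0) :
    (M.map (algebraMap K L)).charpoly.IsRoot (aeval y q) := by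
  have haeval : ∀ z : L,
      aeval z (M.charpoly.comp q) = (M.map (algebraMap K L)).charpoly.eval (aeval z q) :=
    fun z => by rw [aeval_comp, charpoly_map, eval_map_algebraMap]
  obtain ⟨r, hr⟩ := minpoly.dvd K x (p := M.charpoly.comp q) (by rw [haeval]; exact hx)
  rw [IsRoot.def, ← haeval, hr, map_mul, hy, zero_mul]

theorem exists_mulVec_eq_smul_of_isRoot_charpoly [DecidableEq ι] {K : Type*} [Field K]
    {M : Matrix ι ι K} {μ : K} (h : M.charpoly.IsRoot μ) : ∃ w ≠ 0, M *ᵥ w = μ • w := by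
  have hμ : Module.End.HasEigenvalue (toLin' M) μ := by
    rwa [Module.End.hasEigenvalue_iff_isRoot_charpoly, charpoly_toLin']
  obtain ⟨w, hw⟩ := hμ.exists_hasEigenvector
  exact ⟨w, hw.2, hw.apply_eq_smul⟩

theorem PosSemidef.nonneg_of_mulVec_eq_smul {G : Matrix ι ι ℝ} (hG : G.PosSemidef) {w : ι → ℝ}
    (hw : w ≠ 0) {μ : ℝ} (h : G *ᵥ w = μ • w) : 0 ≤ μ := by
  have hquad := hG.dotProduct_mulVec_nonneg w
  rw [h, dotProduct_smul, smul_eq_mul] at hquad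
  exact nonneg_of_mul_nonneg_left hquad (dotProduct_star_self_pos_iff.mpr hw)

end Matrix

noncomputable def seidelMatrix {n : ℕ} (a : ℝ) (C : Finset (EuclideanSpace ℝ (Fin n))) :
    Matrix C C ℚ :=
  fun v w => if v = w then 0 else if inner ℝ (v : EuclideanSpace ℝ (Fin n)) w = a then 1 else -1

namespace SphericalCode

variable {n : ℕ} {a : ℝ} {C : Finset (EuclideanSpace ℝ (Fin n))}

theorem gram_eq_one_add_smul_seidelMatrix (hC : SphericalCode n {-a, a} C) (ha : a ≠ 0) :
    gram ℝ (Subtype.val : C → EuclideanSpace ℝ (Fin n)) =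
      1 + a • (seidelMatrix a C).map (algebraMap ℚ ℝ) := by
  ext v w
  by_cases hvw : v = w
  · subst hvw
    simp [seidelMatrix, hC.1 v v.2]
  · have hne : -a ≠ a := fun h => ha (by linarith)
    rcases hC.2 v v.2 w w.2 (Subtype.coe_ne_coe.mpr hvw) with h | h
    · simp [seidelMatrix, hvw, h, hne]
    · simp_all [seidelMatrix]

theorem isRoot_charpoly_seidelMatrix_of_card_gt (hC : SphericalCode n {-a, a} C) (ha : a ≠ 0)
    (hcard : n < C.card) :
    ((seidelMatrix a C).map (algebraMap ℚ ℝ)).charpoly.IsRoot (-a⁻¹) := by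
  have hdet : (gram ℝ (Subtype.val : C → EuclideanSpace ℝ (Fin n))).det = 0 := by
    by_contra h
    have := (det_gram_ne_zero_iff_linearIndependent.mp h).fintype_card_le_finrank
    simp only [Fintype.card_coe, finrank_euclideanSpace_fin] at this
    omega
  have hscalar : scalar C (-a⁻¹) - (seidelMatrix a C).map (algebraMap ℚ ℝ) =
      (-a⁻¹) • gram ℝ (Subtype.val : C → EuclideanSpace ℝ (Fin n)) := by
    rw [hC.gram_eq_one_add_smul_seidelMatrix ha, smul_add, smul_smul, neg_mul, inv_mul_cancel₀ ha,
      neg_one_smul, scalar_apply, ← smul_one_eq_diagonal, sub_eq_add_neg]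
  rw [IsRoot.def, eval_charpoly, hscalar, det_smul, hdet, mul_zero]

theorem one_add_mul_nonneg_of_isRoot_charpoly_seidelMatrix (hC : SphericalCode n {-a, a} C)
    (ha : a ≠ 0) {μ : ℝ} (hμ : ((seidelMatrix a C).map (algebraMap ℚ ℝ)).charpoly.IsRoot μ) :
    0 ≤ 1 + a * μ := by
  obtain ⟨w, hw, hSw⟩ := exists_mulVec_eq_smul_of_isRoot_charpoly hμ
  refine (posSemidef_gram ℝ (Subtype.val : C → EuclideanSpace ℝ (Fin n))).nonneg_of_mulVec_eq_smul
    hw ?_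
  rw [hC.gram_eq_one_add_smul_seidelMatrix ha, add_mulVec, one_mulVec, smul_mulVec, hSw, smul_smul,
    add_smul, one_smul]

theorem card_le_of_lt_conj (hC : SphericalCode n {-a, a} C) (ha : 0 < a) {l' : ℝ}
    (hl' : aeval l' (minpoly ℚ ((1 - a) / (2 * a))) = 0) (hlt : (1 - a) / (2 * a) < l') :
    C.card ≤ n := by
  by_contra! hcard
  set l := (1 - a) / (2 * a)
  have hal : a * (2 * l + 1) = 1 := by simp only [l]; field_simp; ring
  have hq : ∀ x : ℝ, aeval x (-(2 * X + 1) : ℚ[X]) = -(2 * x + 1) := fun x => by simp [map_ofNat]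
  have hroot := hC.isRoot_charpoly_seidelMatrix_of_card_gt ha.ne' hcard
  rw [inv_eq_of_mul_eq_one_right hal, ← hq] at hroot
  have hnonneg := hC.one_add_mul_nonneg_of_isRoot_charpoly_seidelMatrix ha.ne'
    (isRoot_charpoly_map_aeval_of_aeval_minpoly _ _ hroot hl')
  rw [hq] at hnonneg
  nlinarith

end SphericalCode

theorem exists_inner_eq_ite {a : ℝ} (ha0 : 0 ≤ a) (ha1 : a < 1) (n : ℕ) :
    ∃ v : Fin n → EuclideanSpace ℝ (Fin n),
      ∀ i j, inner ℝ (v i) (v j) = if i = j then 1 else a := by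
  set s := √(1 - a)
  set r := √(1 - a + n * a)
  have hs : s ^ 2 = 1 - a := Real.sq_sqrt (by linarith)
  have hr : r ^ 2 = 1 - a + n * a := Real.sq_sqrt (by positivity)
  have hrs : 0 < r + s :=
    add_pos_of_nonneg_of_pos (Real.sqrt_nonneg _) (Real.sqrt_pos.mpr (by linarith))
  -- `t` is the positive root of `n t² + 2 s t = a`
  set t := a / (r + s)
  have ht : t * (r + s) = a := div_mul_cancel₀ _ hrs.ne'
  have hnt : n * t = r - s := by
    rw [mul_div_assoc', div_eq_iff hrs.ne']; linear_combination hs - hr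
  let o : EuclideanSpace ℝ (Fin n) := WithLp.toLp 2 (fun _ => 1)
  refine ⟨fun i => s • EuclideanSpace.single i 1 + t • o, fun i j => ?_⟩
  have hoo : inner ℝ o o = n := by rw [PiLp.inner_apply]; simp [o]
  simp only [inner_add_left, inner_add_right, real_inner_smul_left, real_inner_smul_right,
    EuclideanSpace.inner_single_left, EuclideanSpace.inner_single_right, hoo]
  rcases eq_or_ne i j with rfl | hij
  · simp only [PiLp.smul_apply, PiLp.single_eq_same, smul_eq_mul, mul_one, Real.ringHom_apply,
      one_mul, ↓reduceIte, o]
    linear_combination hs + t * hnt + ht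
  · simp only [PiLp.smul_apply, ne_eq, hij.symm, not_false_eq_true, PiLp.single_eq_of_ne,
      smul_eq_mul, mul_zero, Real.ringHom_apply, mul_one, one_mul, zero_add, hij, ↓reduceIte, o]
    linear_combination t * hnt + ht

theorem exists_sphericalCode_card_eq {a : ℝ} (ha0 : 0 ≤ a) (ha1 : a < 1) (n : ℕ) :
    ∃ C, SphericalCode n {-a, a} C ∧ C.card = n := by
  obtain ⟨v, hv⟩ := exists_inner_eq_ite ha0 ha1 n
  have hinj : Function.Injective v := fun i j hij => by
    by_contra hne
    have := hv i j
    rw [if_neg hne, ← hij, hv, if_pos rfl] at this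
    exact ha1.ne' this
  refine ⟨Finset.univ.image v, ⟨Finset.forall_mem_image.mpr fun i _ => ?_,
    Finset.forall_mem_image.mpr fun i _ => Finset.forall_mem_image.mpr fun j _ hne => ?_⟩,
    by simp [Finset.card_image_of_injective _ hinj]⟩
  · have := hv i i
    rw [if_pos rfl, real_inner_self_eq_norm_sq] at this
    exact (pow_eq_one_iff_of_nonneg (norm_nonneg _) two_ne_zero).mp this
  · rw [hv, if_neg (fun h => hne (congrArg v h))]
    exact Or.inr rfl

theorem Nmax_eq_of_forall_card_le {a : ℝ} {n k : ℕ}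
    (hle : ∀ C, SphericalCode n {-a, a} C → C.card ≤ k)
    (hex : ∃ C, SphericalCode n {-a, a} C ∧ C.card = k) : Nmax a n = k :=
  IsGreatest.csSup_eq ⟨hex, by rintro _ ⟨C, hC, rfl⟩; exact hle C hC⟩

theorem stmt16_general (a : ℝ) (ha : a ∈ Set.Ioo (0 : ℝ) 1)
    (hconj : ∃ l' : ℝ, Polynomial.aeval l' (minpoly ℚ ((1 - a) / (2 * a))) = 0 ∧
      (1 - a) / (2 * a) < l') :
    ∀ n : ℕ, 1 ≤ n → n ≤ Nmax a n ∧ Nmax a n ≤ n + 2 := by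
  obtain ⟨l', hl', hlt⟩ := hconj
  intro n _
  have hN : Nmax a n = n := Nmax_eq_of_forall_card_le
    (fun C hC => hC.card_le_of_lt_conj ha.1 hl' hlt) (exists_sphericalCode_card_eq ha.1.le ha.2 n)
  omega

theorem stmt16 (a : ℝ) (ha : a ∈ Set.Ioo (0 : ℝ) 1)
    (htr : TotallyRealAlgInt ((1 - a) / (2 * a)))
    (hconj : ∃ l' : ℝ, Polynomial.aeval l' (minpoly ℚ ((1 - a) / (2 * a))) = 0 ∧
      (1 - a) / (2 * a) < l') :
    ∀ n : ℕ, 1 ≤ n → n ≤ Nmax a n ∧ Nmax a n ≤ n + 2 :=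
  stmt16_general a ha hconj
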